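/- If R is a complete term rewrite system, then the TRS R̈ obtained by normalizing all right-hand sides, removing duplicate variants, and then deleting every rule whose left-hand side is reducible by another remaining rule, is a canonical (reduced and complete) TRS that is both normalization equivalent and conversion equivalent to R. -/

import Mathlib

/-!
Every rule `ℓ → r↓` of `R̈` is simulated by `ℓ →_R r →*_R r↓`, so `→_R̈ ⊆ →_R⁺`. Conversely every
`R`-redex is an `R̈`-redex: a left-hand side of `Ṙ` reducible by another rule of `Ṙ` properly
encompasses that rule's left-hand side, because two rules whose left-hand sides are renamings of
each other have, by confluence, renamed normal forms as right-hand sides and so are variants.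
Proper encompassment is well founded (compare size, then the number of distinct variables), so
every left-hand side of `Ṙ` encompasses one of `R̈`. A subrelation of `→_R⁺` with the same normal
forms as a complete `→_R` is itself complete, with the same normalizations and conversions.
-/

namespace KB

def NF {α : Type _} (r : α → α → Prop) (a : α) : Prop := ∀ b, ¬ r a b

def SymmCl {α : Type _} (r : α → α → Prop) (a b : α) : Prop := r a b ∨ r b a

def Conv {α : Type _} (r : α → α → Prop) : α → α → Prop :=
  Relation.ReflTransGen (SymmCl r)

def Joinable {α : Type _} (r : α → α → Prop) (a b : α) : Prop :=
  ∃ c, Relation.ReflTransGen r a c ∧ Relation.ReflTransGen r b c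

def Confluent {α : Type _} (r : α → α → Prop) : Prop :=
  ∀ a b c, Relation.ReflTransGen r a b → Relation.ReflTransGen r a c → Joinable r b c

def Terminating {α : Type _} (r : α → α → Prop) : Prop :=
  WellFounded (fun a b => r b a)

def Complete {α : Type _} (r : α → α → Prop) : Prop := Terminating r ∧ Confluent r

def NormTo {α : Type _} (r : α → α → Prop) (a b : α) : Prop :=
  Relation.ReflTransGen r a b ∧ NF r b

inductive Term (F V : Type) : Type where
  | var : V → Term F V
  | app : F → List (Term F V) → Term F V

variable {F V : Type}

def Term.subst (σ : V → Term F V) : Term F V → Term F V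
  | .var x => σ x
  | .app f ts => .app f (ts.attach.map fun t => Term.subst σ t.1)
decreasing_by
  simp only [Term.app.sizeOf_spec]
  have := List.sizeOf_lt_of_mem t.2
  omega

def Term.rename (π : V → V) (t : Term F V) : Term F V :=
  t.subst (fun x => Term.var (π x))

inductive Ctx (F V : Type) : Type where
  | hole : Ctx F V
  | cons : F → List (Term F V) → Ctx F V → List (Term F V) → Ctx F V

def Ctx.fill : Ctx F V → Term F V → Term F V
  | .hole, t => t
  | .cons f l C r, t => Term.app f (l ++ C.fill t :: r)

abbrev TRS (F V : Type) := Set (Term F V × Term F V)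

def Step (R : TRS F V) (s t : Term F V) : Prop :=
  ∃ (C : Ctx F V) (σ : V → Term F V) (l r : Term F V),
    (l, r) ∈ R ∧ s = C.fill (l.subst σ) ∧ t = C.fill (r.subst σ)

inductive InVars (x : V) : Term F V → Prop where
  | var : InVars x (Term.var x)
  | app {f : F} {ts : List (Term F V)} {t : Term F V} :
      t ∈ ts → InVars x t → InVars x (Term.app f ts)

def WellFormedRule (l r : Term F V) : Prop :=
  (∀ x : V, l ≠ Term.var x) ∧ ∀ x, InVars x r → InVars x l

def IsTRS (R : TRS F V) : Prop := ∀ p ∈ R, WellFormedRule p.1 p.2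

inductive Ground : Term F V → Prop where
  | app {f : F} {ts : List (Term F V)} : (∀ t ∈ ts, Ground t) → Ground (Term.app f ts)

def GroundSys (R : TRS F V) : Prop := ∀ p ∈ R, Ground p.1 ∧ Ground p.2

def LeftReduced (R : TRS F V) : Prop := ∀ p ∈ R, NF (Step (R \ {p})) p.1
def RightReduced (R : TRS F V) : Prop := ∀ p ∈ R, NF (Step R) p.2
def Reduced (R : TRS F V) : Prop := LeftReduced R ∧ RightReduced R

def RuleVariant (p q : Term F V × Term F V) : Prop :=
  ∃ π : V → V, Function.Bijective π ∧ p.1 = q.1.rename π ∧ p.2 = q.2.rename π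

def LitSim (R S : TRS F V) : Prop :=
  (∀ p ∈ R, ∃ q ∈ S, RuleVariant p q) ∧ (∀ q ∈ S, ∃ p ∈ R, RuleVariant q p)

def Encompass (s t : Term F V) : Prop :=
  ∃ (C : Ctx F V) (σ : V → Term F V), s = C.fill (t.subst σ)

def PEncompass (s t : Term F V) : Prop := Encompass s t ∧ ¬ Encompass t s

def ReductionOrder (gt : Term F V → Term F V → Prop) : Prop :=
  Transitive gt ∧ WellFounded (fun a b => gt b a) ∧
  (∀ (C : Ctx F V) s t, gt s t → gt (C.fill s) (C.fill t)) ∧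
  (∀ (σ : V → Term F V) s t, gt s t → gt (s.subst σ) (t.subst σ))

def subt : List ℕ → Term F V → Option (Term F V)
  | [], t => some t
  | _ :: _, Term.var _ => none
  | i :: p, Term.app _ ts => (ts[i]?).bind (subt p)

def repl : List ℕ → Term F V → Term F V → Option (Term F V)
  | [], _, u => some u
  | _ :: _, Term.var _, _ => none
  | i :: p, Term.app f ts, u =>
      (ts[i]?).bind fun w => (repl p w u).map fun w' => Term.app f (ts.set i w')

def FunPos (p : List ℕ) (t : Term F V) : Prop :=
  ∃ f ts, subt p t = some (Term.app f ts)

def Unifier (σ : V → Term F V) (s t : Term F V) : Prop := s.subst σ = t.subst σ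

def IsMGU (σ : V → Term F V) (s t : Term F V) : Prop :=
  Unifier σ s t ∧ ∀ τ, Unifier τ s t → ∃ ρ, ∀ x, (σ x).subst ρ = τ x

def VarsDisjoint (p q : Term F V × Term F V) : Prop :=
  ∀ x, ¬ ((InVars x p.1 ∨ InVars x p.2) ∧ (InVars x q.1 ∨ InVars x q.2))

def Overlap (R : TRS F V) (l1 r1 : Term F V) (p : List ℕ) (l2 r2 : Term F V) : Prop :=
  (∃ q ∈ R, RuleVariant (l1, r1) q) ∧
  (∃ q ∈ R, RuleVariant (l2, r2) q) ∧
  VarsDisjoint (l1, r1) (l2, r2) ∧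
  FunPos p l2 ∧
  (∃ w, subt p l2 = some w ∧ ∃ σ, Unifier σ l1 w) ∧
  (p = [] → ¬ RuleVariant (l1, r1) (l2, r2))

def CPeak (R : TRS F V) (t : Term F V) (p : List ℕ) (s u : Term F V) : Prop :=
  ∃ (l1 r1 l2 r2 : Term F V) (σ : V → Term F V) (w : Term F V),
    Overlap R l1 r1 p l2 r2 ∧ subt p l2 = some w ∧ IsMGU σ l1 w ∧
    s = l2.subst σ ∧ u = r2.subst σ ∧
    repl p (l2.subst σ) (r1.subst σ) = some t

def PrimeCPeak (R : TRS F V) (t : Term F V) (p : List ℕ) (s u : Term F V) : Prop :=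
  CPeak R t p s u ∧
  ∀ w v, subt p s = some w → (∃ q, q ≠ [] ∧ subt q w = some v) → NF (Step R) v

def PCP (R : TRS F V) : Set (Term F V × Term F V) :=
  { e | ∃ p s, PrimeCPeak R e.1 p s e.2 }

def Nabla (R : TRS F V) (s u w : Term F V) : Prop :=
  Relation.TransGen (Step R) s u ∧ Relation.TransGen (Step R) s w ∧
  (Joinable (Step R) u w ∨ SymmCl (Step (PCP R)) u w)

inductive ConvN {α : Type _} (r : α → α → Prop) : ℕ → ℕ → α → α → Prop where
  | refl (a : α) : ConvN r 0 0 a a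
  | fwd {l n : ℕ} {a b c : α} : r a b → ConvN r l n b c → ConvN r l (n + 1) a c
  | bwd {l n : ℕ} {a b c : α} : r b a → ConvN r l n b c → ConvN r (l + 1) n a c

inductive StepsN {α : Type _} (r : α → α → Prop) : ℕ → α → α → Prop where
  | refl (a : α) : StepsN r 0 a a
  | step {n : ℕ} {a b c : α} : r a b → StepsN r n b c → StepsN r (n + 1) a c

def RandomDescent {α : Type _} (r : α → α → Prop) : Prop :=
  ∀ l m a b, ConvN r l m a b → NF r b → ∃ n, StepsN r n a b ∧ n + l = m

section ARS

variable {α : Type*} {r s : α → α → Prop} {a b c d : α}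

theorem NF.eq_of_reflTransGen (ha : NF r a) (h : Relation.ReflTransGen r a b) : a = b := by
  rcases h.cases_head with rfl | ⟨c, hc, -⟩
  · rfl
  · exact absurd hc (ha c)

theorem Terminating.exists_normTo (hr : Terminating r) (a : α) : ∃ b, NormTo r a b := by
  induction a using hr.induction with
  | _ a ih =>
    by_cases ha : NF r a
    · exact ⟨a, .refl, ha⟩
    · obtain ⟨b, hab⟩ : ∃ b, r a b := by simpa [NF] using ha
      obtain ⟨c, hbc, hc⟩ := ih b hab
      exact ⟨c, hbc.head hab, hc⟩

theorem Confluent.normTo_of_reflTransGen (hr : Confluent r) (hab : Relation.ReflTransGen r a b)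
    (hac : NormTo r a c) : NormTo r b c := by
  obtain ⟨d, hcd, hbd⟩ := hr a c b hac.1 hab
  exact ⟨hac.2.eq_of_reflTransGen hcd ▸ hbd, hac.2⟩

theorem Confluent.normTo_unique (hr : Confluent r) (hb : NormTo r a b) (hc : NormTo r a c) :
    b = c :=
  hb.2.eq_of_reflTransGen (hr.normTo_of_reflTransGen hb.1 hc).1

theorem Confluent.joinable_of_conv (hr : Confluent r) (h : Conv r a b) : Joinable r a b := by
  induction h with
  | refl => exact ⟨a, .refl, .refl⟩
  | @tail b c _ hbc ih =>
    obtain ⟨d, had, hbd⟩ := ih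
    rcases hbc with hbc | hcb
    · obtain ⟨e, hde, hce⟩ := hr b d c hbd (.single hbc)
      exact ⟨e, had.trans hde, hce⟩
    · exact ⟨d, had, hbd.head hcb⟩

theorem Confluent.normTo_eq_of_conv (hr : Confluent r) (h : Conv r a b) (hac : NormTo r a c)
    (hbd : NormTo r b d) : c = d := by
  obtain ⟨e, hae, hbe⟩ := hr.joinable_of_conv h
  exact hr.normTo_unique (hr.normTo_of_reflTransGen hae hac) (hr.normTo_of_reflTransGen hbe hbd)

theorem Conv.symm (h : Conv r a b) : Conv r b a :=
  Relation.ReflTransGen.mono (fun _ _ h => Or.symm h) _ _ (Relation.ReflTransGen.swap _ _ h)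

theorem Conv.of_reflTransGen (h : Relation.ReflTransGen r a b) : Conv r a b :=
  Relation.ReflTransGen.mono (fun _ _ => Or.inl) _ _ h

theorem Terminating.of_le_transGen (hr : Terminating r) (hsr : s ≤ Relation.TransGen r) :
    Terminating s :=
  Subrelation.wf (fun h => Relation.transGen_swap.2 (hsr _ _ h)) hr.transGen

theorem NF.of_le_transGen (hsr : s ≤ Relation.TransGen r) (ha : NF r a) : NF s a := by
  intro b hab
  obtain ⟨c, hac, -⟩ := Relation.TransGen.head'_iff.1 (hsr a b hab)
  exact ha c hac

theorem NormTo.of_le_transGen (hsr : s ≤ Relation.TransGen r) (hnf : ∀ a, NF s a → NF r a)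
    (h : NormTo s a b) : NormTo r a b :=
  ⟨Relation.ReflTransGen.lift' id (fun a b h => (hsr a b h).to_reflTransGen) _ _ h.1, hnf b h.2⟩

theorem Complete.of_le_transGen (hr : Complete r) (hsr : s ≤ Relation.TransGen r)
    (hnf : ∀ a, NF s a → NF r a) : Complete s := by
  have hs := hr.1.of_le_transGen hsr
  refine ⟨hs, fun a b c hab hac => ?_⟩
  obtain ⟨b', hbb'⟩ := hs.exists_normTo b
  obtain ⟨c', hcc'⟩ := hs.exists_normTo c
  have : b' = c' := hr.2.normTo_unique
    (NormTo.of_le_transGen hsr hnf ⟨hab.trans hbb'.1, hbb'.2⟩)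
    (NormTo.of_le_transGen hsr hnf ⟨hac.trans hcc'.1, hcc'.2⟩)
  exact ⟨b', hbb'.1, this ▸ hcc'.1⟩

theorem normTo_iff_of_le_transGen (hr : Complete r) (hsr : s ≤ Relation.TransGen r)
    (hnf : ∀ a, NF s a → NF r a) : NormTo r a b ↔ NormTo s a b := by
  refine ⟨fun hab => ?_, NormTo.of_le_transGen hsr hnf⟩
  obtain ⟨b', hab'⟩ := (hr.1.of_le_transGen hsr).exists_normTo a
  rwa [hr.2.normTo_unique hab (hab'.of_le_transGen hsr hnf)]

theorem conv_iff_of_le_transGen (hr : Complete r) (hsr : s ≤ Relation.TransGen r)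
    (hnf : ∀ a, NF s a → NF r a) : Conv r a b ↔ Conv s a b := by
  constructor
  · intro hab
    have hs := hr.1.of_le_transGen hsr
    obtain ⟨c, hac⟩ := hs.exists_normTo a
    obtain ⟨d, hbd⟩ := hs.exists_normTo b
    have hcd : c = d := hr.2.normTo_eq_of_conv hab
      (hac.of_le_transGen hsr hnf) (hbd.of_le_transGen hsr hnf)
    exact (Conv.of_reflTransGen hac.1).trans (hcd ▸ (Conv.of_reflTransGen hbd.1).symm)
  · refine Relation.ReflTransGen.lift' id (fun a b hab => ?_) a b
    rcases hab with hab | hba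
    · exact Conv.of_reflTransGen (hsr a b hab).to_reflTransGen
    · exact (Conv.of_reflTransGen (hsr b a hba).to_reflTransGen).symm

end ARS

@[induction_eliminator]
theorem Term.induction {motive : Term F V → Prop} (var : ∀ x, motive (.var x))
    (app : ∀ f ts, (∀ t ∈ ts, motive t) → motive (.app f ts)) : ∀ t, motive t
  | .var x => var x
  | .app f ts => app f ts fun t _ => Term.induction var app t

namespace Term

@[simp]
theorem subst_var (σ : V → Term F V) (x : V) : (Term.var x).subst σ = σ x := by
  rw [Term.subst]

@[simp]
theorem subst_app (σ : V → Term F V) (f : F) (ts : List (Term F V)) :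
    (Term.app f ts).subst σ = .app f (ts.map (subst σ)) := by
  rw [Term.subst]
  simp

theorem subst_congr {σ τ : V → Term F V} {t : Term F V}
    (h : ∀ x, InVars x t → σ x = τ x) : t.subst σ = t.subst τ := by
  induction t with
  | var x => simpa using h x .var
  | app f ts ih =>
    simp only [subst_app, app.injEq, true_and]
    exact List.map_congr_left fun t ht => ih t ht fun x hx => h x (.app ht hx)

@[simp]
theorem subst_var_eq_self (t : Term F V) : t.subst Term.var = t := by
  induction t with
  | var x => simp
  | app f ts ih => simpa using List.map_congr_left ih

theorem subst_subst (σ τ : V → Term F V) (t : Term F V) :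
    (t.subst σ).subst τ = t.subst fun x => (σ x).subst τ := by
  induction t with
  | var x => simp
  | app f ts ih => simpa using List.map_congr_left ih

end Term

def Ctx.comp : Ctx F V → Ctx F V → Ctx F V
  | .hole, D => D
  | .cons f l C r, D => .cons f l (C.comp D) r

def Ctx.subst (σ : V → Term F V) : Ctx F V → Ctx F V
  | .hole => .hole
  | .cons f l C r => .cons f (l.map (Term.subst σ)) (C.subst σ) (r.map (Term.subst σ))

theorem Ctx.fill_comp (C D : Ctx F V) (t : Term F V) : (C.comp D).fill t = C.fill (D.fill t) := by
  induction C with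
  | hole => rfl
  | cons f l C r ih => simp [Ctx.comp, Ctx.fill, ih]

theorem Term.subst_fill (σ : V → Term F V) (C : Ctx F V) (t : Term F V) :
    (C.fill t).subst σ = (C.subst σ).fill (t.subst σ) := by
  induction C with
  | hole => rfl
  | cons f l C r ih => simp [Ctx.fill, Ctx.subst, ih]

theorem Encompass.refl (t : Term F V) : Encompass t t :=
  ⟨.hole, .var, (Term.subst_var_eq_self t).symm⟩

theorem Encompass.trans {s t u : Term F V} (hst : Encompass s t) (htu : Encompass t u) :
    Encompass s u := by
  obtain ⟨C, σ, rfl⟩ := hst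
  obtain ⟨D, τ, rfl⟩ := htu
  exact ⟨C.comp (D.subst σ), fun x => (τ x).subst σ, by
    rw [Term.subst_fill, Term.subst_subst, Ctx.fill_comp]⟩

theorem Encompass.rename_left (t : Term F V) (π : V → V) : Encompass (t.rename π) t :=
  ⟨.hole, fun x => .var (π x), rfl⟩

theorem Step.of_mem {R : TRS F V} {l r : Term F V} (h : (l, r) ∈ R) : Step R l r :=
  ⟨.hole, .var, l, r, h, (Term.subst_var_eq_self l).symm, (Term.subst_var_eq_self r).symm⟩

theorem Step.mono {R S : TRS F V} (hRS : R ⊆ S) : Step R ≤ Step S :=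
  fun _ _ ⟨C, σ, l, r, h, hs, ht⟩ => ⟨C, σ, l, r, hRS h, hs, ht⟩

theorem Step.fill {R : TRS F V} {s t : Term F V} (h : Step R s t) (C : Ctx F V) :
    Step R (C.fill s) (C.fill t) := by
  obtain ⟨D, σ, l, r, hlr, rfl, rfl⟩ := h
  exact ⟨C.comp D, σ, l, r, hlr, (Ctx.fill_comp ..).symm, (Ctx.fill_comp ..).symm⟩

theorem Step.subst {R : TRS F V} {s t : Term F V} (h : Step R s t) (σ : V → Term F V) :
    Step R (s.subst σ) (t.subst σ) := by
  obtain ⟨C, τ, l, r, hlr, rfl, rfl⟩ := h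
  exact ⟨C.subst σ, fun x => (τ x).subst σ, l, r, hlr,
    by rw [Term.subst_fill, Term.subst_subst], by rw [Term.subst_fill, Term.subst_subst]⟩

theorem exists_step_iff_encompass {R : TRS F V} {s : Term F V} :
    (∃ t, Step R s t) ↔ ∃ p ∈ R, Encompass s p.1 := by
  constructor
  · rintro ⟨t, C, σ, l, r, hlr, rfl, -⟩
    exact ⟨(l, r), hlr, C, σ, rfl⟩
  · rintro ⟨⟨l, r⟩, hlr, C, σ, rfl⟩
    exact ⟨_, C, σ, l, r, hlr, rfl, rfl⟩

theorem Step.le_transGen {R S : TRS F V} (hS : ∀ p ∈ S, Relation.TransGen (Step R) p.1 p.2) :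
    Step S ≤ Relation.TransGen (Step R) := by
  rintro _ _ ⟨C, σ, l, r, hlr, rfl, rfl⟩
  have hσ := Relation.TransGen.lift (Term.subst σ) (fun _ _ h => Step.subst h σ) _ _ (hS _ hlr)
  exact Relation.TransGen.lift C.fill (fun _ _ h => Step.fill h C) _ _ hσ

theorem NormTo.rename {R : TRS F V} {s t : Term F V} (h : NormTo (Step R) s t) {π : V → V}
    (hπ : Function.Bijective π) : NormTo (Step R) (s.rename π) (t.rename π) := by
  refine ⟨Relation.ReflTransGen.lift _ (fun _ _ h => Step.subst h _) _ _ h.1, fun u hu => ?_⟩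
  obtain ⟨π', hπ', -⟩ := Function.bijective_iff_has_inverse.1 hπ
  have hinv : (t.rename π).rename π' = t := by
    simp [Term.rename, Term.subst_subst, hπ' _]
  have := hu.subst fun x => .var (π' x)
  rw [← Term.rename, hinv] at this
  exact h.2 _ this

namespace Term

def size : Term F V → ℕ
  | .var _ => 1
  | .app _ ts => 1 + (ts.attach.map fun t => t.1.size).sum
decreasing_by
  simp only [Term.app.sizeOf_spec]
  have := List.sizeOf_lt_of_mem t.2
  omega

def varList : Term F V → List V
  | .var x => [x]
  | .app _ ts => ts.attach.flatMap fun t => t.1.varList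
decreasing_by
  simp only [Term.app.sizeOf_spec]
  have := List.sizeOf_lt_of_mem t.2
  omega

def vars [DecidableEq V] (t : Term F V) : Finset V := t.varList.toFinset

@[simp]
theorem size_var (x : V) : (Term.var x : Term F V).size = 1 := by
  rw [size]

@[simp]
theorem size_app (f : F) (ts : List (Term F V)) :
    (Term.app f ts).size = 1 + (ts.map size).sum := by
  rw [size]
  simp

@[simp]
theorem varList_var (x : V) : (Term.var x : Term F V).varList = [x] := by
  rw [varList]

@[simp]
theorem varList_app (f : F) (ts : List (Term F V)) :
    (Term.app f ts).varList = ts.flatMap varList := by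
  rw [varList]
  simp

theorem mem_varList {x : V} {t : Term F V} : x ∈ t.varList ↔ InVars x t := by
  induction t with
  | var y =>
    simp only [varList_var, List.mem_singleton]
    exact ⟨fun h => h ▸ .var, fun h => by cases h; rfl⟩
  | app f ts ih =>
    simp only [varList_app, List.mem_flatMap]
    constructor
    · rintro ⟨t, ht, hx⟩
      exact .app ht ((ih t ht).1 hx)
    · rintro (_ | ⟨ht, hx⟩)
      exact ⟨_, ht, (ih _ ht).2 hx⟩

theorem size_pos (t : Term F V) : 0 < t.size := by
  cases t <;> simp

theorem size_lt_of_mem {t : Term F V} {f : F} {ts : List (Term F V)} (h : t ∈ ts) :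
    t.size < (Term.app f ts).size := by
  have := List.le_sum_of_mem (List.mem_map_of_mem (f := size) h)
  simp only [size_app]
  omega

theorem length_varList_le_size (t : Term F V) : t.varList.length ≤ t.size := by
  induction t with
  | var x => simp
  | app f ts ih =>
    simp only [varList_app, size_app, List.length_flatMap]
    have := List.sum_le_sum fun t ht => ih t ht
    omega

theorem card_vars_le_size [DecidableEq V] (t : Term F V) : t.vars.card ≤ t.size :=
  (List.toFinset_card_le _).trans t.length_varList_le_size

theorem varList_subst (σ : V → Term F V) (t : Term F V) :
    (t.subst σ).varList = t.varList.flatMap fun x => (σ x).varList := by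
  induction t with
  | var x => simp
  | app f ts ih =>
    simp only [subst_app, varList_app, List.flatMap_map, List.flatMap_assoc]
    exact List.flatMap_congr ih

theorem mem_vars_subst [DecidableEq V] {σ : V → Term F V} {t : Term F V} {x : V} :
    x ∈ (t.subst σ).vars ↔ ∃ y ∈ t.vars, x ∈ (σ y).vars := by
  simp [vars, varList_subst]

theorem size_subst (σ : V → Term F V) (t : Term F V) :
    (t.subst σ).size = t.size + (t.varList.map fun x => (σ x).size - 1).sum := by
  induction t with
  | var x =>
    have := (σ x).size_pos
    simp only [subst_var, size_var, varList_var, List.map_cons, List.map_nil, List.sum_cons,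
      List.sum_nil]
    omega
  | app f ts ih =>
    have hts : (ts.map (size ∘ subst σ)) = ts.map fun t =>
        t.size + (t.varList.map fun x => (σ x).size - 1).sum := List.map_congr_left ih
    rw [subst_app, size_app, size_app, List.map_map, hts, List.sum_map_add, varList_app,
      List.flatMap, List.map_flatten, List.sum_flatten, List.map_map, List.map_map, add_assoc]
    rfl

theorem size_le_size_fill (C : Ctx F V) (t : Term F V) : t.size ≤ (C.fill t).size := by
  induction C with
  | hole => rfl
  | cons f l C r ih => exact ih.trans (size_lt_of_mem (by simp)).le

theorem size_lt_size_fill_cons (f : F) (l r : List (Term F V)) (C : Ctx F V) (t : Term F V) :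
    t.size < ((Ctx.cons f l C r).fill t).size :=
  (size_le_size_fill C t).trans_lt (size_lt_of_mem (by simp))

theorem eq_var_or_varList_eq_nil_of_size_le_one {t : Term F V} (h : t.size ≤ 1) :
    (∃ x, t = .var x) ∨ t.varList = [] := by
  rcases t with x | ⟨f, _ | ⟨u, us⟩⟩
  · exact .inl ⟨x, rfl⟩
  · simp
  · have := u.size_pos
    simp only [size_app, List.map_cons, List.sum_cons] at h
    omega

end Term

theorem exists_bijective_eqOn_of_injOn {s : Finset V} {g : V → V} (hg : Set.InjOn g s) :
    ∃ π : V → V, Function.Bijective π ∧ Set.EqOn π g s := by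
  let f : (s : Set V) ↪ V := ⟨fun x => g x, fun a b h => Subtype.ext (hg a.2 b.2 h)⟩
  obtain ⟨e, he⟩ : ∃ e : V ≃ V, ∀ x : (s : Set V), e x = f x := by
    cases finite_or_infinite V
    · exact Cardinal.extend_function_finite f ⟨.refl V⟩
    · refine Cardinal.extend_function_of_lt f ?_ ⟨.refl V⟩
      exact (Cardinal.lt_aleph0_of_finite _).trans_le (Cardinal.aleph0_le_mk V)
  exact ⟨e, e.bijective, fun y hy => he ⟨y, hy⟩⟩

/-- A size-preserving substitution sends the variables of `t` to variables or constants; if it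
also keeps the number of distinct variables, it is injective on them. -/
theorem Term.exists_rename_of_size_subst_eq [DecidableEq V] {t : Term F V} {σ : V → Term F V}
    (hsize : (t.subst σ).size = t.size) (hcard : t.vars.card ≤ (t.subst σ).vars.card) :
    ∃ π : V → V, Function.Bijective π ∧ t.subst σ = t.rename π := by
  classical
  have hsmall : ∀ x ∈ t.vars, (σ x).size ≤ 1 := by
    intro x hx
    have hsum := Term.size_subst σ t
    have hx' := List.sum_eq_zero_iff.1 (by omega) _
      (List.mem_map_of_mem (f := fun x => (σ x).size - 1) (List.mem_toFinset.1 hx))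
    omega
  set X := t.vars.filter fun x => ∃ y, σ x = .var y
  let g : V → V := fun x => if h : ∃ y, σ x = .var y then h.choose else x
  have hg : ∀ x ∈ X, σ x = .var (g x) := fun x hx => by
    have hx := (Finset.mem_filter.1 hx).2
    simpa [g, hx] using hx.choose_spec
  have hsub : (t.subst σ).vars ⊆ X.image g := by
    intro z hz
    obtain ⟨x, hx, hzx⟩ := Term.mem_vars_subst.1 hz
    rcases Term.eq_var_or_varList_eq_nil_of_size_le_one (hsmall x hx) with ⟨y, hy⟩ | hnil
    · have hxX : x ∈ X := Finset.mem_filter.2 ⟨hx, y, hy⟩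
      rw [hg x hxX] at hzx
      simp only [Term.vars, Term.varList_var, List.toFinset_cons, List.toFinset_nil,
        insert_empty_eq, Finset.mem_singleton] at hzx
      exact Finset.mem_image.2 ⟨x, hxX, hzx.symm⟩
    · simp [Term.vars, hnil] at hzx
  have hXcard : t.vars.card ≤ (X.image g).card := hcard.trans (Finset.card_le_card hsub)
  have hX : X = t.vars :=
    Finset.eq_of_subset_of_card_le (Finset.filter_subset _ _) (hXcard.trans Finset.card_image_le)
  have hinj : Set.InjOn g X :=
    Finset.card_image_iff.1 (le_antisymm Finset.card_image_le (hX ▸ hXcard))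
  obtain ⟨π, hπ, hπg⟩ := exists_bijective_eqOn_of_injOn hinj
  refine ⟨π, hπ, Term.subst_congr fun x hx => ?_⟩
  have hxX : x ∈ X := hX ▸ List.mem_toFinset.2 (Term.mem_varList.2 hx)
  rw [hg x hxX, hπg hxX]

def Term.encRank [DecidableEq V] (t : Term F V) : ℕ ×ₗ ℕ := toLex (t.size, t.size - t.vars.card)

theorem Encompass.encRank_lt_or_eq_rename [DecidableEq V] {s t : Term F V} (h : Encompass s t) :
    t.encRank < s.encRank ∨ ∃ π : V → V, Function.Bijective π ∧ s = t.rename π := by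
  obtain ⟨C, σ, rfl⟩ := h
  have hle : t.size ≤ (t.subst σ).size := by rw [Term.size_subst]; omega
  cases C with
  | cons f l C r =>
    exact .inl (Prod.Lex.toLex_lt_toLex.2 (.inl (hle.trans_lt (Term.size_lt_size_fill_cons ..))))
  | hole =>
    change _ < (t.subst σ).encRank ∨ ∃ π, _ ∧ t.subst σ = _
    have hcs := (t.subst σ).card_vars_le_size
    have hct := t.card_vars_le_size
    by_cases hsize : t.size < (t.subst σ).size
    · exact .inl (Prod.Lex.toLex_lt_toLex.2 (.inl hsize))
    by_cases hcard : (t.subst σ).vars.card < t.vars.card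
    · exact .inl (Prod.Lex.toLex_lt_toLex.2 (.inr ⟨by omega, by omega⟩))
    exact .inr (Term.exists_rename_of_size_subst_eq (by omega) (by omega))

/-- `leftReduct Ṙ` is the paper's `R̈`. -/
def leftReduct (S : TRS F V) : TRS F V := {p ∈ S | NF (Step (S \ {p})) p.1}

theorem leftReduced_leftReduct (S : TRS F V) : LeftReduced (leftReduct S) :=
  fun _ hp _ hstep => hp.2 _ (Step.mono (Set.sdiff_subset_sdiff_left fun _ hq => hq.1) _ _ hstep)

theorem exists_mem_leftReduct_encompass {S : TRS F V}
    (hS : ∀ p ∈ S, ∀ q ∈ S, ∀ π : V → V, Function.Bijective π → p.1 = q.1.rename π → p = q)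
    (p : Term F V × Term F V) (hp : p ∈ S) : ∃ q ∈ leftReduct S, Encompass p.1 q.1 := by
  classical
  induction p using (InvImage.wf (fun p : Term F V × Term F V => p.1.encRank)
    wellFounded_lt).induction with
  | _ p ih =>
    by_cases hred : NF (Step (S \ {p})) p.1
    · exact ⟨p, ⟨hp, hred⟩, .refl _⟩
    obtain ⟨q, ⟨hqS, hqp⟩, hpq⟩ : ∃ q ∈ S \ {p}, Encompass p.1 q.1 :=
      exists_step_iff_encompass.1 (by simpa [NF] using hred)
    rcases hpq.encRank_lt_or_eq_rename with hlt | ⟨π, hπ, hren⟩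
    · obtain ⟨q', hq', hqq'⟩ := ih q hlt hqS
      exact ⟨q', hq', hpq.trans hqq'⟩
    · exact absurd (hS p hp q hqS π hπ hren).symm hqp

theorem ruleVariant_of_normTo {R : TRS F V} (hR : Confluent (Step R)) {l r l' r' : Term F V}
    (h : NormTo (Step R) l r) (h' : NormTo (Step R) l' r') {π : V → V}
    (hπ : Function.Bijective π) (hl : l = l'.rename π) : RuleVariant (l, r) (l', r') :=
  ⟨π, hπ, hl, hR.normTo_unique h (hl ▸ h'.rename hπ)⟩

theorem metivier_canonical_general {F V : Type} (R : TRS F V)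
    (hC : Complete (Step R))
    (nf : Term F V → Term F V)
    (hnf : ∀ t, Relation.ReflTransGen (Step R) t (nf t) ∧ NF (Step R) (nf t))
    (dotR : TRS F V)
    (hd1 : ∀ p ∈ dotR, ∃ q ∈ R, p = (q.1, nf q.2))
    (hd2 : ∀ q ∈ R, ∃ p ∈ dotR, RuleVariant (q.1, nf q.2) p)
    (hvf : ∀ p ∈ dotR, ∀ q ∈ dotR, RuleVariant p q → p = q)
    (ddotR : TRS F V)
    (hdd : ddotR = {p ∈ dotR | NF (Step (dotR \ {p})) p.1}) :
    Complete (Step ddotR) ∧ Reduced ddotR ∧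
    (∀ a b, NormTo (Step R) a b ↔ NormTo (Step ddotR) a b) ∧
    (∀ a b, Conv (Step R) a b ↔ Conv (Step ddotR) a b) := by
  change ddotR = leftReduct dotR at hdd
  subst hdd
  have hdot : ∀ p ∈ dotR, Relation.TransGen (Step R) p.1 p.2 ∧ NF (Step R) p.2 := by
    intro p hp
    obtain ⟨q, hq, rfl⟩ := hd1 p hp
    exact ⟨.head' (Step.of_mem hq) (hnf q.2).1, (hnf q.2).2⟩
  have hsub : Step (leftReduct dotR) ≤ Relation.TransGen (Step R) :=
    Step.le_transGen fun p hp => (hdot p hp.1).1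
  have hlhs : ∀ p ∈ dotR, ∀ q ∈ dotR, ∀ π : V → V, Function.Bijective π → p.1 = q.1.rename π →
      p = q := fun p hp q hq π hπ hpq => hvf p hp q hq <| ruleVariant_of_normTo hC.2
        ⟨(hdot p hp).1.to_reflTransGen, (hdot p hp).2⟩
        ⟨(hdot q hq).1.to_reflTransGen, (hdot q hq).2⟩ hπ hpq
  have hnfR : ∀ a, NF (Step (leftReduct dotR)) a → NF (Step R) a := by
    intro a ha b hab
    obtain ⟨⟨l, r⟩, hlr, hal⟩ := exists_step_iff_encompass.1 ⟨b, hab⟩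
    obtain ⟨p, hp, π, -, hl, -⟩ := hd2 (l, r) hlr
    obtain ⟨q, hq, hpq⟩ := exists_mem_leftReduct_encompass hlhs p hp
    have haq : Encompass a q.1 := hal.trans ((hl ▸ Encompass.rename_left p.1 π).trans hpq)
    obtain ⟨c, hac⟩ := exists_step_iff_encompass.2 ⟨q, hq, haq⟩
    exact ha c hac
  exact ⟨hC.of_le_transGen hsub hnfR,
    ⟨leftReduced_leftReduct dotR, fun p hp => (hdot p hp.1).2.of_le_transGen hsub⟩,
    fun _ _ => normTo_iff_of_le_transGen hC hsub hnfR,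
    fun _ _ => conv_iff_of_le_transGen hC hsub hnfR⟩

/-- Métivier's transformation: for a complete TRS R, the TRS R̈ is a canonical
TRS that is normalization and conversion equivalent to R. -/
theorem metivier_canonical {F V : Type} (R : TRS F V) (hTRS : IsTRS R)
    (hC : Complete (Step R))
    (nf : Term F V → Term F V)
    (hnf : ∀ t, Relation.ReflTransGen (Step R) t (nf t) ∧ NF (Step R) (nf t))
    (dotR : TRS F V)
    (hd1 : ∀ p ∈ dotR, ∃ q ∈ R, p = (q.1, nf q.2))
    (hd2 : ∀ q ∈ R, ∃ p ∈ dotR, RuleVariant (q.1, nf q.2) p)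
    (hvf : ∀ p ∈ dotR, ∀ q ∈ dotR, RuleVariant p q → p = q)
    (ddotR : TRS F V)
    (hdd : ddotR = {p ∈ dotR | NF (Step (dotR \ {p})) p.1}) :
    Complete (Step ddotR) ∧ Reduced ddotR ∧
    (∀ a b, NormTo (Step R) a b ↔ NormTo (Step ddotR) a b) ∧
    (∀ a b, Conv (Step R) a b ↔ Conv (Step ddotR) a b) :=
  metivier_canonical_general R hC nf hnf dotR hd1 hd2 hvf ddotR hdd

end KB
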